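/- Fix m ≥ 3 and let μ ∈ Opt(m). For any edge e ∈ supp μ, μ(e) ≤ 1/m, with equality if and only if e belongs to every unlabeled m-cycle of the support graph G_μ. -/

import Mathlib

open Finset

/-- The cyclic successor of an index in `Fin m`. -/
def cnext {m : ℕ} (i : Fin m) : Fin m := ⟨(i.1 + 1) % m, Nat.mod_lt _ i.pos⟩

/-- `μ` is a probability mass on the 2-element subsets of `X`: it is nonnegative,
vanishes on the diagonal, and has total mass 1. -/
def IsProbMass {X : Type*} [Fintype X] [DecidableEq X] (μ : Sym2 X → ℝ) : Prop :=
  (∀ e, 0 ≤ μ e) ∧ (∀ e : Sym2 X, e.IsDiag → μ e = 0) ∧ (∑ e : Sym2 X, μ e) = 1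

/-- The weight `μ(C)` of the labeled cycle `f 0, f 1, ..., f (m-1), f 0`. -/
def cycleWeight {X : Type*} (μ : Sym2 X → ℝ) {m : ℕ} (f : Fin m → X) : ℝ :=
  ∏ i : Fin m, μ s(f i, f (cnext i))

/-- `β(μ; m)`: the sum of `μ(C)` over all unlabeled `m`-cycles `C` in the complete
graph on `X`, computed as the sum over labeled cycles divided by `2m` (each unlabeled
`m`-cycle has exactly `2m` labelings). -/
noncomputable def beta {X : Type*} [Fintype X] [DecidableEq X] (μ : Sym2 X → ℝ) (m : ℕ) : ℝ :=
  (∑ f : Fin m → X, if Function.Injective f then cycleWeight μ f else 0) / (2 * m)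

/-- `β(m)`: the supremum of `β(μ; m)` over all probability masses `μ` on the
2-element subsets of a finite set (every finite set being a copy of some `Fin n`). -/
noncomputable def betaSup (m : ℕ) : ℝ :=
  sSup {b : ℝ | ∃ (n : ℕ) (μ : Sym2 (Fin n) → ℝ), IsProbMass μ ∧ b = beta μ m}

/-- The weighted degree `μ̄(x) = ∑_{y ≠ x} μ(xy)`. -/
noncomputable def wdeg {X : Type*} [Fintype X] [DecidableEq X] (μ : Sym2 X → ℝ) (x : X) : ℝ :=
  ∑ y ∈ Finset.univ.filter (· ≠ x), μ s(x, y)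

/-- The support graph `G_μ`, whose edges are the pairs of positive mass. -/
def supportGraph {X : Type*} (μ : Sym2 X → ℝ) : SimpleGraph X where
  Adj x y := x ≠ y ∧ 0 < μ s(x, y)
  symm := ⟨fun x y h => ⟨h.1.symm, by rw [Sym2.eq_swap]; exact h.2⟩⟩
  loopless := ⟨fun x h => h.1 rfl⟩

/-!
Perturb an optimal `μ` along a support edge `e`: give `e` the mass `u` and rescale every other
edge by `c = (1 - u) / (1 - μ e)`. An injective `m`-cycle (`m ≥ 3`) passes through `e` at most
once, so the labeled cycle sum of the perturbed mass is `u c^(m-1) T + c^m A`, where `T` is the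
weight of the cycles through `e` with the factor `μ e` removed and `A` the weight of the cycles
avoiding `e`. Optimality makes `u = μ e` an interior maximum, and the vanishing derivative gives
`T (1 - m μ(e)) = m A`. As `T > 0` (otherwise `β(μ; m) = 0`), `μ(e) ≤ 1/m`, with equality iff
`A = 0`, i.e. iff every `m`-cycle of `G_μ` passes through `e`.
-/

section CycleEdges

variable {m : ℕ}

lemma cnext_val (i : Fin m) : (cnext i : ℕ) = if (i : ℕ) + 1 = m then 0 else (i : ℕ) + 1 := by
  unfold cnext
  split_ifs with h
  · simp [h]
  · exact Nat.mod_eq_of_lt (by omega)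

lemma cnext_ne (hm : 2 ≤ m) (i : Fin m) : cnext i ≠ i := by
  rw [Ne, Fin.ext_iff, cnext_val]
  split_ifs <;> omega

lemma cnext_cnext_ne (hm : 3 ≤ m) (i : Fin m) : cnext (cnext i) ≠ i := by
  rw [Ne, Fin.ext_iff, cnext_val, cnext_val]
  split_ifs <;> omega

lemma cycle_edge_injective {X : Type*} (hm : 3 ≤ m) {f : Fin m → X}
    (hf : Function.Injective f) : Function.Injective fun i => s(f i, f (cnext i)) := by
  intro i j h
  rcases Sym2.eq_iff.1 h with ⟨hij, -⟩ | ⟨hij, hji⟩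
  · exact hf hij
  · exact absurd (by rw [← hf hij, hf hji]) (cnext_cnext_ne hm j)

end CycleEdges

section CycleWeight

variable {X : Type*} {m : ℕ}

lemma cycleWeight_nonneg {μ : Sym2 X → ℝ} (hμ : ∀ e, 0 ≤ μ e) (f : Fin m → X) :
    0 ≤ cycleWeight μ f :=
  prod_nonneg fun _ _ => hμ _

lemma cycleWeight_update_smul [DecidableEq X] (μ : Sym2 X → ℝ) (e : Sym2 X) (u c : ℝ)
    (f : Fin m → X) :
    cycleWeight (Function.update (c • μ) e u) f =
      u ^ #{i | s(f i, f (cnext i)) = e} * c ^ #{i | s(f i, f (cnext i)) ≠ e} *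
        cycleWeight (Function.update μ e 1) f := by
  have hsplit : ∀ e', Function.update (c • μ) e u e' =
      (if e' = e then u else c) * Function.update μ e 1 e' := by
    intro e'
    by_cases h : e' = e <;> simp [h]
  simp only [cycleWeight, hsplit, prod_mul_distrib, prod_ite, prod_const]

end CycleWeight

section CycleSums

variable {X : Type*} [Fintype X] [DecidableEq X] {m : ℕ}

noncomputable def cycleSum (μ : Sym2 X → ℝ) (m : ℕ) : ℝ :=
  ∑ f : Fin m → X, if Function.Injective f then cycleWeight μ f else 0

/-- The weight of the labeled `m`-cycles through `e`, with the factor `μ e` removed. -/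
noncomputable def throughSum (μ : Sym2 X → ℝ) (e : Sym2 X) (m : ℕ) : ℝ :=
  ∑ f : Fin m → X, if Function.Injective f ∧ ∃ i, s(f i, f (cnext i)) = e
    then cycleWeight (Function.update μ e 1) f else 0

noncomputable def avoidSum (μ : Sym2 X → ℝ) (e : Sym2 X) (m : ℕ) : ℝ :=
  ∑ f : Fin m → X, if Function.Injective f ∧ ∀ i, s(f i, f (cnext i)) ≠ e
    then cycleWeight μ f else 0

lemma beta_eq_cycleSum (μ : Sym2 X → ℝ) : beta μ m = cycleSum μ m / (2 * m) := rfl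

lemma cycleSum_update_smul (hm : 3 ≤ m) (μ : Sym2 X → ℝ) (e : Sym2 X) (u c : ℝ) :
    cycleSum (Function.update (c • μ) e u) m =
      u * c ^ (m - 1) * throughSum μ e m + c ^ m * avoidSum μ e m := by
  simp only [cycleSum, throughSum, avoidSum, mul_sum, ← sum_add_distrib]
  refine sum_congr rfl fun f _ => ?_
  by_cases hf : Function.Injective f
  swap
  · simp [hf]
  have hcard := card_filter_add_card_filter_not
    (s := (univ : Finset (Fin m))) (fun i => s(f i, f (cnext i)) = e)
  rw [card_univ, Fintype.card_fin] at hcard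
  by_cases hthrough : ∃ i, s(f i, f (cnext i)) = e
  · obtain ⟨i₀, hi₀⟩ := hthrough
    have hone : ({i | s(f i, f (cnext i)) = e} : Finset (Fin m)) = {i₀} := by
      ext i
      simp only [mem_filter, mem_univ, true_and, mem_singleton]
      exact ⟨fun h => cycle_edge_injective hm hf (h.trans hi₀.symm), fun h => h ▸ hi₀⟩
    rw [hone, card_singleton] at hcard
    have hrest : #{i | s(f i, f (cnext i)) ≠ e} = m - 1 := by simp only [ne_eq]; omega
    rw [if_pos hf, if_pos ⟨hf, i₀, hi₀⟩, if_neg fun h => h.2 i₀ hi₀,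
      cycleWeight_update_smul, hone, card_singleton, hrest]
    ring
  · push Not at hthrough
    have hnone : ({i | s(f i, f (cnext i)) = e} : Finset (Fin m)) = ∅ :=
      filter_eq_empty_iff.2 fun i _ => hthrough i
    rw [hnone, card_empty] at hcard
    have hrest : #{i | s(f i, f (cnext i)) ≠ e} = m := by simp only [ne_eq]; omega
    have hweight : cycleWeight (Function.update μ e 1) f = cycleWeight μ f :=
      prod_congr rfl fun i _ => Function.update_of_ne (hthrough i) _ _
    rw [if_pos hf, if_neg fun h => not_exists.2 hthrough h.2, if_pos ⟨hf, hthrough⟩,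
      cycleWeight_update_smul, hnone, card_empty, hrest, hweight]
    ring

lemma cycleSum_eq_add (hm : 3 ≤ m) (μ : Sym2 X → ℝ) (e : Sym2 X) :
    cycleSum μ m = μ e * throughSum μ e m + avoidSum μ e m := by
  simpa using cycleSum_update_smul hm μ e (μ e) 1

lemma cycleSum_nonneg {μ : Sym2 X → ℝ} (hμ : ∀ e, 0 ≤ μ e) : 0 ≤ cycleSum μ m :=
  sum_nonneg fun f _ => by split_ifs <;> simp [cycleWeight_nonneg hμ]

lemma throughSum_nonneg {μ : Sym2 X → ℝ} (hμ : ∀ e, 0 ≤ μ e) (e : Sym2 X) :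
    0 ≤ throughSum μ e m := by
  have hμ' : ∀ e', 0 ≤ Function.update μ e 1 e' := fun e' => by
    by_cases h : e' = e <;> simp [h, hμ]
  exact sum_nonneg fun f _ => by split_ifs <;> simp [cycleWeight_nonneg hμ']

lemma avoidSum_nonneg {μ : Sym2 X → ℝ} (hμ : ∀ e, 0 ≤ μ e) (e : Sym2 X) :
    0 ≤ avoidSum μ e m :=
  sum_nonneg fun f _ => by split_ifs <;> simp [cycleWeight_nonneg hμ]

lemma avoidSum_eq_zero_iff {μ : Sym2 X → ℝ} (hμ : ∀ e, 0 ≤ μ e) (e : Sym2 X) :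
    avoidSum μ e m = 0 ↔ ∀ f : Fin m → X, Function.Injective f →
      (∀ i, 0 < μ s(f i, f (cnext i))) → ∃ i, s(f i, f (cnext i)) = e := by
  rw [avoidSum, sum_eq_zero_iff_of_nonneg fun f _ => by
    split_ifs <;> simp [cycleWeight_nonneg hμ]]
  refine forall_congr' fun f => ?_
  simp only [mem_univ, true_implies, ite_eq_right_iff, and_imp, cycleWeight,
    prod_eq_zero_iff, true_and]
  refine imp_congr_right fun _ => ?_
  constructor
  · intro h hpos
    by_contra! hnone
    obtain ⟨i, hi⟩ := h hnone
    exact (hpos i).ne' hi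
  · intro h hnone
    by_contra! hpos
    exact absurd (h fun i => (hμ _).lt_of_ne' (hpos i)) (not_exists.2 hnone)

end CycleSums

lemma Sym2.map_equiv_bijective {X Y : Type*} (σ : X ≃ Y) : Function.Bijective (Sym2.map σ) := by
  refine Function.bijective_iff_has_inverse.2 ⟨Sym2.map σ.symm, fun e => ?_, fun e => ?_⟩ <;>
    simp [Sym2.map_map]

section BetaSup

variable {X : Type*} [Fintype X] [DecidableEq X] {m : ℕ}

lemma IsProbMass.le_one {μ : Sym2 X → ℝ} (hμ : IsProbMass μ) (e : Sym2 X) : μ e ≤ 1 :=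
  hμ.2.2 ▸ single_le_sum (fun e' _ => hμ.1 e') (mem_univ e)

lemma sum_mk_le_two_mul_sum {μ : Sym2 X → ℝ} (hμ : ∀ e, 0 ≤ μ e) :
    ∑ p : X × X, μ s(p.1, p.2) ≤ 2 * ∑ e, μ e := by
  rw [← sum_fiberwise univ (fun p : X × X => s(p.1, p.2)), mul_sum]
  refine sum_le_sum fun e _ => ?_
  have hfiber : #{p : X × X | s(p.1, p.2) = e} ≤ 2 := by
    induction e using Sym2.ind with
    | _ a b =>
      refine (card_le_card (t := {(a, b), (b, a)}) fun p hp => ?_).trans card_le_two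
      rcases Sym2.eq_iff.1 (mem_filter.1 hp).2 with ⟨h1, h2⟩ | ⟨h1, h2⟩ <;>
        simp [Prod.ext_iff, h1, h2]
  calc ∑ p : X × X with s(p.1, p.2) = e, μ s(p.1, p.2)
      = #{p : X × X | s(p.1, p.2) = e} * μ e := by
        rw [sum_congr rfl fun p hp => congrArg μ (mem_filter.1 hp).2, sum_const, nsmul_eq_mul]
    _ ≤ 2 * μ e := by gcongr; exacts [hμ e, by exact_mod_cast hfiber]

lemma cycleSum_le_two_pow {μ : Sym2 X → ℝ} (hμ : IsProbMass μ) :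
    cycleSum μ m ≤ 2 ^ m := by
  let pairs : (Fin m → X) ↪ (Fin m → X × X) :=
    ⟨fun f i => (f i, f (cnext i)),
      fun f g h => funext fun i => congrArg Prod.fst (congrFun h i)⟩
  calc cycleSum μ m ≤ ∑ f : Fin m → X, cycleWeight μ f :=
        sum_le_sum fun f _ => by split_ifs <;> simp [cycleWeight_nonneg hμ.1]
    _ = ∑ g ∈ univ.map pairs, ∏ i, μ s((g i).1, (g i).2) := by
        rw [sum_map]; rfl
    _ ≤ ∑ g : Fin m → X × X, ∏ i, μ s((g i).1, (g i).2) :=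
        sum_le_univ_sum_of_nonneg fun g => prod_nonneg fun _ _ => hμ.1 _
    _ = (∑ p : X × X, μ s(p.1, p.2)) ^ m :=
        (Fintype.sum_pow (fun p : X × X => μ s(p.1, p.2)) m).symm
    _ ≤ 2 ^ m := by
        gcongr
        · exact sum_nonneg fun _ _ => hμ.1 _
        · simpa [hμ.2.2] using sum_mk_le_two_mul_sum hμ.1

lemma beta_le_two_pow {μ : Sym2 X → ℝ} (hμ : IsProbMass μ) : beta μ m ≤ 2 ^ m := by
  rcases Nat.eq_zero_or_pos m with rfl | hm
  · simp [beta]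
  rw [beta_eq_cycleSum]
  refine (div_le_self (cycleSum_nonneg hμ.1) ?_).trans (cycleSum_le_two_pow hμ)
  have : (1 : ℝ) ≤ m := by exact_mod_cast hm
  linarith

lemma IsProbMass.comp_map_equiv {Y : Type*} [Fintype Y] [DecidableEq Y] {μ : Sym2 X → ℝ}
    (hμ : IsProbMass μ) (σ : Y ≃ X) : IsProbMass (μ ∘ Sym2.map σ) := by
  refine ⟨fun e => hμ.1 _, fun e he => hμ.2.1 _ (Sym2.isDiag_map σ.injective |>.2 he), ?_⟩
  rw [← hμ.2.2]
  exact Fintype.sum_bijective _ (Sym2.map_equiv_bijective σ) _ _ fun _ => rfl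

lemma beta_comp_map_equiv {Y : Type*} [Fintype Y] [DecidableEq Y] (μ : Sym2 X → ℝ)
    (σ : Y ≃ X) : beta (μ ∘ Sym2.map σ) m = beta μ m := by
  unfold beta
  congr 1
  refine Fintype.sum_bijective (σ ∘ ·) ⟨σ.injective.comp_left, σ.surjective.comp_left⟩ _ _
    fun f => ?_
  simp only [cycleWeight, Function.comp_apply, Sym2.map_mk, σ.injective.of_comp_iff]

lemma beta_le_betaSup {μ : Sym2 X → ℝ} (hμ : IsProbMass μ) : beta μ m ≤ betaSup m := by
  let σ := (Fintype.equivFin X).symm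
  rw [← beta_comp_map_equiv μ σ]
  exact le_csSup ⟨2 ^ m, by rintro b ⟨n, ν, hν, rfl⟩; exact beta_le_two_pow hν⟩
    ⟨_, _, hμ.comp_map_equiv σ, rfl⟩

end BetaSup

section BetaSupPos

variable {m : ℕ}

noncomputable def uniformCycle (m : ℕ) : Sym2 (Fin m) → ℝ :=
  fun e => if e ∈ univ.image (fun i => s(i, cnext i)) then (m : ℝ)⁻¹ else 0

lemma isProbMass_uniformCycle (hm : 3 ≤ m) : IsProbMass (uniformCycle m) := by
  refine ⟨fun e => by unfold uniformCycle; positivity, fun e he => ?_, ?_⟩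
  · rw [uniformCycle, if_neg]
    simp only [mem_image, mem_univ, true_and, not_exists]
    rintro i rfl
    exact cnext_ne (by omega) i (Sym2.mk_isDiag_iff.1 he).symm
  · have hinj : Function.Injective fun i : Fin m => s(i, cnext i) :=
      cycle_edge_injective hm Function.injective_id
    unfold uniformCycle
    rw [sum_ite_mem, univ_inter, sum_const, card_image_of_injective _ hinj, card_univ,
      Fintype.card_fin, nsmul_eq_mul, mul_inv_cancel₀ (by positivity)]

lemma betaSup_pos (hm : 3 ≤ m) : 0 < betaSup m := by
  have hid : cycleWeight (uniformCycle m) id = ((m : ℝ)⁻¹) ^ m := by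
    calc cycleWeight (uniformCycle m) id = ∏ _i : Fin m, (m : ℝ)⁻¹ :=
          prod_congr rfl fun i _ => if_pos (mem_image_of_mem _ (mem_univ i))
      _ = ((m : ℝ)⁻¹) ^ m := by simp
  have hsum : ((m : ℝ)⁻¹) ^ m ≤ cycleSum (uniformCycle m) m := by
    rw [← hid]
    refine (if_pos Function.injective_id).symm.le.trans
      (single_le_sum (f := fun f : Fin m → Fin m => if Function.Injective f
        then cycleWeight (uniformCycle m) f else 0) (fun f _ => ?_) (mem_univ id))
    split_ifs <;> simp [cycleWeight_nonneg (isProbMass_uniformCycle hm).1]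
  refine lt_of_lt_of_le ?_ (beta_le_betaSup (isProbMass_uniformCycle hm))
  rw [beta_eq_cycleSum]
  have : (0 : ℝ) < m := by positivity
  exact div_pos ((pow_pos (inv_pos.2 this) m).trans_le hsum) (by positivity)

end BetaSupPos

lemma IsProbMass.update_smul {X : Type*} [Fintype X] [DecidableEq X] {μ : Sym2 X → ℝ}
    (hμ : IsProbMass μ) {e : Sym2 X} (he : ¬ e.IsDiag) (hμe : μ e < 1) {u : ℝ}
    (hu : u ∈ Set.Icc 0 1) :
    IsProbMass (Function.update (((1 - u) / (1 - μ e)) • μ) e u) := by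
  have hc : 0 ≤ (1 - u) / (1 - μ e) := div_nonneg (by linarith [hu.2]) (by linarith)
  refine ⟨fun e' => ?_, fun e' he' => ?_, ?_⟩
  · rcases eq_or_ne e' e with rfl | h
    · simpa using hu.1
    · simpa [h] using mul_nonneg hc (hμ.1 e')
  · have h : e' ≠ e := by rintro rfl; exact he he'
    simp [h, hμ.2.1 e' he']
  · have hrest := sum_eq_sum_sdiff_singleton_add (mem_univ e) μ
    rw [hμ.2.2] at hrest
    rw [sum_update_of_mem (mem_univ e)]
    simp only [Pi.smul_apply, smul_eq_mul, ← mul_sum]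
    rw [show ∑ e' ∈ univ \ {e}, μ e' = 1 - μ e by linarith]
    field_simp [(by linarith : (1 - μ e) ≠ 0)]
    ring

lemma mul_one_sub_eq_of_isMaxOn {m : ℕ} (hm : 1 ≤ m) {A B x : ℝ} (hx0 : 0 < x) (hx1 : x < 1)
    (hmax : IsMaxOn (fun u => u * ((1 - u) / (1 - x)) ^ (m - 1) * A + ((1 - u) / (1 - x)) ^ m * B)
      (Set.Icc 0 1) x) :
    A * (1 - m * x) = m * B := by
  have hc : HasDerivAt (fun u => (1 - u) / (1 - x)) (-1 / (1 - x)) x :=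
    ((hasDerivAt_id x).const_sub 1).div_const (1 - x)
  have hderiv := (((hasDerivAt_id x).mul (hc.pow (m - 1))).mul_const A).add ((hc.pow m).mul_const B)
  have hzero := (hmax.isLocalMax (Icc_mem_nhds hx0 hx1)).hasDerivAt_eq_zero hderiv
  have hx : 1 - x ≠ 0 := by linarith
  simp only [Pi.pow_apply, div_self hx, one_pow, id, Nat.cast_sub hm, Nat.cast_one] at hzero
  field_simp at hzero
  linear_combination hzero

section Optimal

variable {X : Type*} [Fintype X] [DecidableEq X] {m : ℕ} {μ : Sym2 X → ℝ}

lemma lt_one_of_beta_eq_betaSup (hm : 3 ≤ m) (hμ : IsProbMass μ)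
    (hopt : beta μ m = betaSup m) (e : Sym2 X) : μ e < 1 := by
  by_contra! h
  have hrest : ∑ e' ∈ univ \ {e}, μ e' = 0 := by
    linarith [sum_eq_sum_sdiff_singleton_add (mem_univ e) μ, hμ.2.2, hμ.le_one e]
  have hμ_eq : Function.update ((0 : ℝ) • μ) e (μ e) = μ := by
    ext e'
    rcases eq_or_ne e' e with rfl | h
    · simp
    · have := (sum_eq_zero_iff_of_nonneg fun _ _ => hμ.1 _).1 hrest e' (by simp [h])
      simpa [h, eq_comm] using this
  have hzero := cycleSum_update_smul hm μ e (μ e) 0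
  rw [hμ_eq, zero_pow (by omega), zero_pow (by omega)] at hzero
  have := hopt ▸ betaSup_pos hm
  simp [beta_eq_cycleSum, hzero] at this

lemma isMaxOn_of_beta_eq_betaSup (hm : 3 ≤ m) (hμ : IsProbMass μ)
    (hopt : beta μ m = betaSup m) {e : Sym2 X} (he : ¬ e.IsDiag) :
    IsMaxOn (fun u => u * ((1 - u) / (1 - μ e)) ^ (m - 1) * throughSum μ e m +
      ((1 - u) / (1 - μ e)) ^ m * avoidSum μ e m) (Set.Icc 0 1) (μ e) := by
  intro u hu
  have hμe := lt_one_of_beta_eq_betaSup hm hμ hopt e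
  have hle := beta_le_betaSup (m := m) (hμ.update_smul he hμe hu)
  rw [← hopt, beta_eq_cycleSum, beta_eq_cycleSum, cycleSum_update_smul hm,
    cycleSum_eq_add hm μ e, div_le_div_iff_of_pos_right (by positivity)] at hle
  simpa [div_self (by linarith : 1 - μ e ≠ 0)] using hle

lemma throughSum_mul_eq_of_beta_eq_betaSup (hm : 3 ≤ m) (hμ : IsProbMass μ)
    (hopt : beta μ m = betaSup m) {e : Sym2 X} (he : 0 < μ e) :
    throughSum μ e m * (1 - m * μ e) = m * avoidSum μ e m :=
  mul_one_sub_eq_of_isMaxOn (by omega) he (lt_one_of_beta_eq_betaSup hm hμ hopt e)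
    (isMaxOn_of_beta_eq_betaSup hm hμ hopt fun hd => he.ne' (hμ.2.1 e hd))

lemma throughSum_pos_of_beta_eq_betaSup (hm : 3 ≤ m) (hμ : IsProbMass μ)
    (hopt : beta μ m = betaSup m) {e : Sym2 X} (he : 0 < μ e) : 0 < throughSum μ e m := by
  refine (throughSum_nonneg hμ.1 e).lt_of_ne' fun hT => ?_
  have hA : avoidSum μ e m = 0 := by
    have := throughSum_mul_eq_of_beta_eq_betaSup hm hμ hopt he
    rw [hT, zero_mul, eq_comm, mul_eq_zero] at this
    exact this.resolve_left (by positivity)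
  have := hopt ▸ betaSup_pos hm
  simp [beta_eq_cycleSum, cycleSum_eq_add hm μ e, hT, hA] at this

end Optimal

/-- For `m ≥ 3` and `μ ∈ Opt(m)`: any edge `e ∈ supp μ` satisfies `μ(e) ≤ 1/m`, with
equality iff `e` belongs to every unlabeled `m`-cycle of the support graph `G_μ`. -/
theorem edge_upperbound (m : ℕ) (hm : 3 ≤ m) {X : Type*} [Fintype X] [DecidableEq X]
    (μ : Sym2 X → ℝ) (hμ : IsProbMass μ) (hopt : beta μ m = betaSup m)
    (e : Sym2 X) (he : 0 < μ e) :
    μ e ≤ 1 / m ∧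
      (μ e = 1 / m ↔ ∀ f : Fin m → X, Function.Injective f →
        (∀ i, 0 < μ s(f i, f (cnext i))) → ∃ i, s(f i, f (cnext i)) = e) := by
  have hm0 : (0 : ℝ) < m := by positivity
  have hT := throughSum_pos_of_beta_eq_betaSup hm hμ hopt he
  have hkey := throughSum_mul_eq_of_beta_eq_betaSup hm hμ hopt he
  refine ⟨?_, ?_⟩
  · have : 0 ≤ 1 - m * μ e :=
      nonneg_of_mul_nonneg_right (hkey ▸ mul_nonneg hm0.le (avoidSum_nonneg hμ.1 e)) hT
    rw [le_div_iff₀ hm0]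
    linarith
  · rw [← avoidSum_eq_zero_iff hμ.1 e, ← mul_eq_zero_iff_left hm0.ne', ← hkey,
      mul_eq_zero_iff_left hT.ne', eq_div_iff hm0.ne']
    constructor <;> intro h <;> linarith
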